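/- arXiv:2102.09865 — 4 statements merged into one kernel-verified Lean document; each statement's English description precedes it below -/
import Mathlib

section
/- For all integers m, n > 0, every l ∈ ℤ and every x ∈ M_l, one has e^m f^n(x) = Σ_{r=0}^{min(m,n)} ([m]!·[n]!/([m−r]!·[n−r]!)) · qbinom(l+m−n, r) · f^{n−r} e^{m−r}(x). -/
/-! For `y` of weight `k`, moving `e` past `f^j` gives
`e f^j y = f^j e y + [j][k-j+1] f^(j-1) y`. Applying `e` once more to the formula for
`e^m f^n x` therefore splits each term in two, and the coefficients
`[m]!/[m-r]! · [n]!/[n-r]! · qbinom(l+m-n, r)` reproduce themselves because of the q-analogue of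
`ab = (a-c)(b-c) + (a+b-c)c`. Writing `[m]!/[m-r]!` as the falling product `[m][m-1]⋯[m-r+1]`,
which vanishes for `r > m`, lets the sum run over `r ≤ n` throughout the induction on `m`. -/

noncomputable section

/-- The quantum integer `[n] = (vⁿ − v⁻ⁿ)/(v − v⁻¹)` in `ℚ(v)`. -/
def qint (n : ℤ) : RatFunc ℚ :=
  (RatFunc.X ^ n - RatFunc.X ^ (-n)) / (RatFunc.X - RatFunc.X⁻¹)

/-- The quantum factorial `[r]! = [1][2]⋯[r]`. -/
def qfact (r : ℕ) : RatFunc ℚ := ∏ i ∈ Finset.range r, qint ((i : ℤ) + 1)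

/-- The quantum binomial coefficient `qbinom(n,r) = ([n][n−1]⋯[n−r+1])/[r]!`. -/
def qbinom (n : ℤ) (r : ℕ) : RatFunc ℚ :=
  (∏ i ∈ Finset.range r, qint (n - (i : ℤ))) / qfact r

open RatFunc Finset

lemma X_zpow_ne_one {k : ℤ} (hk : k ≠ 0) : (X : RatFunc ℚ) ^ k ≠ 1 := by
  have hX (n : ℕ) (hn : n ≠ 0) : (X : RatFunc ℚ) ^ n ≠ 1 := fun h => by
    rw [← algebraMap_X, ← map_pow, ← map_one (algebraMap (Polynomial ℚ) _),
      (algebraMap_injective ℚ).eq_iff] at h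
    simpa [hn] using congrArg Polynomial.natDegree h
  rcases Int.natAbs_eq k with h | h <;> rw [h]
  · exact_mod_cast hX _ (by omega)
  · rw [zpow_neg, inv_ne_one]; exact_mod_cast hX _ (by omega)

lemma X_sub_X_inv_ne_zero : (X : RatFunc ℚ) - X⁻¹ ≠ 0 := by
  rw [sub_ne_zero]
  intro h
  apply X_zpow_ne_one (k := 2) two_ne_zero
  rw [show (2 : ℤ) = 1 + 1 by rfl, zpow_add₀ X_ne_zero, zpow_one]
  nth_rw 1 [h]
  exact inv_mul_cancel₀ X_ne_zero

lemma qint_zero : qint 0 = 0 := by simp [qint]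

lemma qint_one : qint 1 = 1 := by
  rw [qint, zpow_one, zpow_neg_one, div_self X_sub_X_inv_ne_zero]

lemma qint_ne_zero {n : ℤ} (hn : n ≠ 0) : qint n ≠ 0 := by
  have hX : (X : RatFunc ℚ) ≠ 0 := X_ne_zero
  refine div_ne_zero (fun h => X_zpow_ne_one (k := n + n) (by omega) ?_) X_sub_X_inv_ne_zero
  rw [zpow_add₀ hX]
  nth_rw 1 [sub_eq_zero.mp h]
  rw [← zpow_add₀ hX, neg_add_cancel, zpow_zero]

-- The q-analogue of `a * b = (a - c) * (b - c) + (a + b - c) * c`.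
lemma qint_mul_qint (a b c : ℤ) :
    qint a * qint b = qint (a - c) * qint (b - c) + qint (a + b - c) * qint c := by
  have hX : (X : RatFunc ℚ) ≠ 0 := X_ne_zero
  simp only [qint, div_mul_div_comm, ← add_div]
  congr 1
  simp only [neg_sub, zpow_add₀ hX, zpow_sub₀ hX, zpow_neg]
  field_simp
  ring

lemma qfact_succ (r : ℕ) : qfact (r + 1) = qfact r * qint (r + 1) :=
  prod_range_succ _ r

lemma qfact_ne_zero (r : ℕ) : qfact r ≠ 0 :=
  prod_ne_zero_iff.mpr fun i _ => qint_ne_zero (by omega)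

def qdescFactorial (a : ℤ) (r : ℕ) : RatFunc ℚ := ∏ i ∈ range r, qint (a - i)

lemma qbinom_eq_qdescFactorial_div (a : ℤ) (r : ℕ) :
    qbinom a r = qdescFactorial a r / qfact r :=
  rfl

lemma qbinom_zero (a : ℤ) : qbinom a 0 = 1 := by
  rw [qbinom, prod_range_zero, qfact, prod_range_zero, div_one]

lemma qdescFactorial_zero (a : ℤ) : qdescFactorial a 0 = 1 := prod_range_zero _

lemma qdescFactorial_succ (a : ℤ) (r : ℕ) :
    qdescFactorial a (r + 1) = qdescFactorial a r * qint (a - r) :=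
  prod_range_succ _ r

lemma qdescFactorial_succ_succ (a : ℤ) (r : ℕ) :
    qdescFactorial (a + 1) (r + 1) = qint (a + 1) * qdescFactorial a r := by
  rw [qdescFactorial, prod_range_succ', mul_comm, qdescFactorial]
  push_cast
  simp only [add_sub_add_right_eq_sub, sub_zero]

lemma qdescFactorial_eq_zero {m r : ℕ} (h : m < r) : qdescFactorial m r = 0 :=
  prod_eq_zero (mem_range.mpr h) (by rw [sub_self, qint_zero])

lemma qfact_add (k r : ℕ) : qfact (k + r) = qdescFactorial (k + r : ℕ) r * qfact k := by
  induction r with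
  | zero => rw [add_zero, qdescFactorial_zero, one_mul]
  | succ r ih =>
    rw [← add_assoc, qfact_succ, ih, Nat.cast_add_one, qdescFactorial_succ_succ]
    ring

lemma qdescFactorial_eq_qfact_div {m r : ℕ} (h : r ≤ m) :
    qdescFactorial m r = qfact m / qfact (m - r) := by
  obtain ⟨k, rfl⟩ := Nat.exists_eq_add_of_le' h
  rw [qfact_add, Nat.add_sub_cancel, mul_div_cancel_right₀ _ (qfact_ne_zero k)]

lemma qint_succ_mul_qbinom_succ_succ (L a : ℤ) (s : ℕ) :
    qint (a + 1) * qbinom (L + 1) (s + 1) =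
      qint (a - s) * qbinom L (s + 1) + qint (L + a + 1 - s) * qbinom L s := by
  have key := qint_mul_qint (a + 1) (L + 1) (s + 1)
  rw [add_sub_add_right_eq_sub, add_sub_add_right_eq_sub,
    show a + 1 + (L + 1) - (s + 1) = L + a + 1 - s by ring] at key
  simp only [qbinom_eq_qdescFactorial_div]
  rw [qdescFactorial_succ_succ, qdescFactorial_succ, qfact_succ]
  have := qfact_ne_zero s
  have := qint_ne_zero (n := s + 1) (by omega)
  field_simp
  linear_combination qdescFactorial L s * key

lemma qdescFactorial_mul_qbinom_succ (m n : ℕ) (L : ℤ) (s : ℕ) :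
    qdescFactorial (m + 1 : ℕ) (s + 1) * qdescFactorial n (s + 1) * qbinom (L + 1) (s + 1) =
      qdescFactorial m (s + 1) * qdescFactorial n (s + 1) * qbinom L (s + 1) +
        qdescFactorial m s * qdescFactorial n s * qbinom L s *
          (qint (n - s) * qint (L + m + 1 - s)) := by
  rw [Nat.cast_succ, qdescFactorial_succ_succ, qdescFactorial_succ m, qdescFactorial_succ n]
  linear_combination qdescFactorial m s * qdescFactorial n s * qint (n - s) *
    qint_succ_mul_qbinom_succ_succ L m s

lemma sum_range_succ_add_sum_range_succ {A : Type*} [AddCommMonoid A] (n : ℕ) (a b : ℕ → A)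
    (hb : b n = 0) :
    ∑ r ∈ range (n + 1), a r + ∑ r ∈ range (n + 1), b r =
      a 0 + ∑ r ∈ range n, (a (r + 1) + b r) := by
  rw [sum_range_succ b, hb, add_zero, sum_range_succ', sum_add_distrib]
  abel

section Module

variable {M : Type*} [AddCommGroup M] [Module (RatFunc ℚ) M]
  {comp : ℤ → Submodule (RatFunc ℚ) M} {e f : Module.End (RatFunc ℚ) M}

lemma pow_apply_mem_of_shift {g : Module.End (RatFunc ℚ) M} {d : ℤ}
    (hg : ∀ l : ℤ, ∀ x ∈ comp l, g x ∈ comp (l + d)) (k : ℕ) {l : ℤ} {x : M}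
    (hx : x ∈ comp l) :
    (g ^ k) x ∈ comp (l + k * d) := by
  induction k generalizing l x with
  | zero => simpa using hx
  | succ k ih =>
    rw [pow_succ, Module.End.mul_apply, Nat.cast_add_one, add_one_mul, add_comm _ d, ← add_assoc]
    exact ih (hg l x hx)

lemma apply_pow_apply_eq_add (hf : ∀ l : ℤ, ∀ x ∈ comp l, f x ∈ comp (l - 2))
    (hcomm : ∀ l : ℤ, ∀ x ∈ comp l, e (f x) - f (e x) = qint l • x)
    (k : ℕ) {l : ℤ} {x : M} (hx : x ∈ comp l) :
    e ((f ^ k) x) = (f ^ k) (e x) + (qint k * qint (l - k + 1)) • (f ^ (k - 1)) x := by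
  induction k generalizing l x with
  | zero => simp [qint_zero]
  | succ k ih =>
    have hef : e (f x) = f (e x) + qint l • x := by rw [← hcomm l x hx]; abel
    have hpow (j : ℕ) (y : M) : (f ^ j) (f y) = (f ^ (j + 1)) y := by
      rw [pow_succ, Module.End.mul_apply]
    have hstep : qint (k + 1) * qint (l - k) = qint k * qint (l - 2 - k + 1) + qint l := by
      simpa [qint_one, show k + 1 + (l - k) - 1 = l by ring, show l - k - 1 = l - 2 - k + 1 by ring]
        using qint_mul_qint (k + 1) (l - k) 1
    rw [← hpow, ih (hf l x hx), hef, map_add, map_smul, hpow]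
    rcases k with _ | k
    · simp [qint_zero, qint_one]
    · rw [Nat.add_sub_cancel, hpow, Nat.add_sub_cancel]
      push_cast at hstep ⊢
      rw [show l - (k + 1 + 1) + 1 = l - (k + 1) by ring, hstep, add_smul]
      abel

lemma pow_apply_pow_apply_eq_sum (he : ∀ l : ℤ, ∀ x ∈ comp l, e x ∈ comp (l + 2))
    (hf : ∀ l : ℤ, ∀ x ∈ comp l, f x ∈ comp (l - 2))
    (hcomm : ∀ l : ℤ, ∀ x ∈ comp l, e (f x) - f (e x) = qint l • x)
    (m n : ℕ) {l : ℤ} {x : M} (hx : x ∈ comp l) :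
    (e ^ m) ((f ^ n) x) = ∑ r ∈ range (n + 1),
      (qdescFactorial m r * qdescFactorial n r * qbinom (l + m - n) r) •
        (f ^ (n - r)) ((e ^ (m - r)) x) := by
  induction m with
  | zero =>
    rw [sum_range_succ', sum_eq_zero fun r _ => by
      rw [qdescFactorial_eq_zero r.succ_pos, zero_mul, zero_mul, zero_smul]]
    simp only [qdescFactorial_zero, qbinom_zero, one_mul, one_smul, zero_add, pow_zero,
      Nat.sub_zero, Module.End.one_apply]
  | succ m ih =>
    have hterm (r : ℕ) (hrn : r ∈ range (n + 1)) :
        (qdescFactorial m r * qdescFactorial n r * qbinom (l + m - n) r) •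
          e ((f ^ (n - r)) ((e ^ (m - r)) x)) =
        (qdescFactorial m r * qdescFactorial n r * qbinom (l + m - n) r) •
          (f ^ (n - r)) ((e ^ (m + 1 - r)) x) +
        (qdescFactorial m r * qdescFactorial n r * qbinom (l + m - n) r *
            (qint (n - r) * qint (l + m - n + m + 1 - r))) •
          (f ^ (n - (r + 1))) ((e ^ (m + 1 - (r + 1))) x) := by
      rw [mem_range] at hrn
      rcases lt_or_ge m r with hmr | hrm
      · simp [qdescFactorial_eq_zero hmr]
      have hy := pow_apply_mem_of_shift he (m - r) hx
      have he_succ : e ((e ^ (m - r)) x) = (e ^ (m + 1 - r)) x := by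
        rw [← Module.End.mul_apply, ← pow_succ', Nat.sub_add_comm hrm]
      rw [apply_pow_apply_eq_add hf hcomm (n - r) hy, he_succ, Nat.sub_sub,
        Nat.add_sub_add_right, smul_add, smul_smul]
      congr 4 <;> congr 1 <;> omega
    rw [pow_succ', Module.End.mul_apply, ih, map_sum]
    simp only [map_smul]
    rw [sum_congr rfl hterm, sum_add_distrib,
      sum_range_succ_add_sum_range_succ _ _ _ (by simp [qint_zero]), sum_range_succ', add_comm]
    simp only [qdescFactorial_zero, qbinom_zero]
    congr 1
    refine sum_congr rfl fun r _ => ?_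
    rw [← add_smul, show l + (m + 1 : ℕ) - n = l + m - n + 1 by push_cast; ring,
      qdescFactorial_mul_qbinom_succ]

end Module

theorem pow_e_pow_f_commutation_general
    {M : Type*} [AddCommGroup M] [Module (RatFunc ℚ) M]
    (comp : ℤ → Submodule (RatFunc ℚ) M)
    (e f : Module.End (RatFunc ℚ) M)
    (he : ∀ l : ℤ, ∀ x ∈ comp l, e x ∈ comp (l + 2))
    (hf : ∀ l : ℤ, ∀ x ∈ comp l, f x ∈ comp (l - 2))
    (hcomm : ∀ l : ℤ, ∀ x ∈ comp l, e (f x) - f (e x) = qint l • x)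
    (m n : ℕ) (l : ℤ) (x : M) (hx : x ∈ comp l) :
    (e ^ m) ((f ^ n) x) =
      ∑ r ∈ Finset.range (min m n + 1),
        (qfact m * qfact n / (qfact (m - r) * qfact (n - r)) * qbinom (l + m - n) r) •
          (f ^ (n - r)) ((e ^ (m - r)) x) := by
  rw [pow_apply_pow_apply_eq_sum he hf hcomm m n hx,
    ← sum_subset (range_subset_range.mpr (by omega : min m n + 1 ≤ n + 1)) fun r hr hr' => ?_]
  · refine sum_congr rfl fun r hr => ?_
    rw [mem_range] at hr
    rw [qdescFactorial_eq_qfact_div (by omega), qdescFactorial_eq_qfact_div (by omega),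
      div_mul_div_comm]
  · rw [mem_range] at hr hr'
    rw [qdescFactorial_eq_zero (by omega), zero_mul, zero_mul, zero_smul]

theorem pow_e_pow_f_commutation
    {M : Type*} [AddCommGroup M] [Module (RatFunc ℚ) M]
    (comp : ℤ → Submodule (RatFunc ℚ) M)
    (hgrading : DirectSum.IsInternal comp)
    (e f : Module.End (RatFunc ℚ) M)
    (he : ∀ l : ℤ, ∀ x ∈ comp l, e x ∈ comp (l + 2))
    (hf : ∀ l : ℤ, ∀ x ∈ comp l, f x ∈ comp (l - 2))
    (hcomm : ∀ l : ℤ, ∀ x ∈ comp l, e (f x) - f (e x) = qint l • x)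
    (m n : ℕ) (hm : 0 < m) (hn : 0 < n) (l : ℤ) (x : M) (hx : x ∈ comp l) :
    (e ^ m) ((f ^ n) x) =
      ∑ r ∈ Finset.range (min m n + 1),
        (qfact m * qfact n / (qfact (m - r) * qfact (n - r)) * qbinom (l + m - n) r) •
          (f ^ (n - r)) ((e ^ (m - r)) x) :=
  pow_e_pow_f_commutation_general comp e f he hf hcomm m n l x hx

end
end

section
/- For all α, β ∈ Π, all integers m, n > 0, every μ ∈ X and every x ∈ P_𝒬(λ)_μ: if α ≠ β then ε_α^{[m]} φ_β^{[n]}(x) = φ_β^{[n]} ε_α^{[m]}(x), and if α = β then ε_α^{[m]} φ_α^{[n]}(x) = Σ_{r=0}^{min(m,n)} qbinom_α(⟨μ,α^∨⟩+m−n, r) · φ_α^{[n−r]} ε_α^{[m−r]}(x). -/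
/-!
Path model `P_𝒬(λ)` for a root system with simple roots indexed by `Pi` inside the weight
lattice `X`: `root α ∈ X` is the simple root, `pair α μ = ⟨μ,α^∨⟩`, `dd α = d_α ∈ {1,2,3}`,
`v_α = v^{d_α}`. `P_𝒬(λ)` is the `ℚ(v)`-vector space with basis the simple root paths
(lists in `Pi`), graded by `P_𝒬(λ)_μ = span{δ : ht(δ) = λ − μ}`, with operators
`φ_α` (prepending `α`), `ε_α`, and divided powers `ε_α^{[n]}`, `φ_α^{[n]}`.

STATEMENT: for `α, β ∈ Π`, `m, n > 0`, `μ ∈ X` and `x ∈ P_𝒬(λ)_μ`: if `α ≠ β` then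
`ε_α^{[m]} φ_β^{[n]}(x) = φ_β^{[n]} ε_α^{[m]}(x)`; if `α = β` then
`ε_α^{[m]} φ_α^{[n]}(x) = Σ_{r=0}^{min(m,n)} qbinom_α(⟨μ,α^∨⟩+m−n, r) · φ_α^{[n−r]} ε_α^{[m−r]}(x)`.
-/

noncomputable section

/-- `𝒵 = ℤ[v,v⁻¹]` realized as a subalgebra of `𝒬 = ℚ(v)`. -/
def ZZ : Subalgebra ℤ (RatFunc ℚ) := Algebra.adjoin ℤ {RatFunc.X, RatFunc.X⁻¹}

/-- The quantum integer `[n]_{v^d}` in `ℚ(v)`. -/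
def qd (d : ℕ) (n : ℤ) : RatFunc ℚ :=
  (RatFunc.X ^ ((d : ℤ) * n) - RatFunc.X ^ (-((d : ℤ) * n))) /
    (RatFunc.X ^ (d : ℤ) - RatFunc.X ^ (-(d : ℤ)))

/-- The quantum factorial `[r]!_{v^d}`. -/
def qfacd (d r : ℕ) : RatFunc ℚ := ∏ i ∈ Finset.range r, qd d ((i : ℤ) + 1)

/-- The quantum binomial coefficient `qbinom(n,r)` in the variable `v^d`. -/
def qbinomd (d : ℕ) (n : ℤ) (r : ℕ) : RatFunc ℚ :=
  (∏ i ∈ Finset.range r, qd d (n - (i : ℤ))) / qfacd d r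

variable {X : Type*} [AddCommGroup X] {Pi : Type*} [DecidableEq Pi]

/-- The height of a path: the sum of its entries, as an element of the weight lattice. -/
def hgt (root : Pi → X) (δ : List Pi) : X := (δ.map root).sum

/-- The operator `φ_α`: prepending `α` to a path, extended linearly. -/
def phiOp (α : Pi) : Module.End (RatFunc ℚ) (List Pi →₀ RatFunc ℚ) :=
  Finsupp.lmapDomain (RatFunc ℚ) (RatFunc ℚ) (List.cons α)

/-- `ε_α` on basis paths. -/
def epsB (root : Pi → X) (pair : Pi → X →+ ℤ) (dd : Pi → ℕ) (lam : X) (α : Pi) :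
    List Pi → (List Pi →₀ RatFunc ℚ)
  | [] => 0
  | β :: t =>
      (if β = α then Finsupp.single t (qd (dd α) (pair α (lam - hgt root t))) else 0)
        + Finsupp.mapDomain (List.cons β) (epsB root pair dd lam α t)

/-- The operator `ε_α`, the linear extension of `epsB`. -/
def epsOp (root : Pi → X) (pair : Pi → X →+ ℤ) (dd : Pi → ℕ) (lam : X) (α : Pi) :
    Module.End (RatFunc ℚ) (List Pi →₀ RatFunc ℚ) :=
  Finsupp.linearCombination (RatFunc ℚ) (epsB root pair dd lam α)

/-- The divided power `ε_α^{[n]} = ε_α^n / [n]_α!`. -/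
def epsDP (root : Pi → X) (pair : Pi → X →+ ℤ) (dd : Pi → ℕ) (lam : X) (α : Pi) (n : ℕ) :
    Module.End (RatFunc ℚ) (List Pi →₀ RatFunc ℚ) :=
  (qfacd (dd α) n)⁻¹ • (epsOp root pair dd lam α) ^ n

/-- The divided power `φ_α^{[n]} = φ_α^n / [n]_α!`. -/
def phiDP (dd : Pi → ℕ) (α : Pi) (n : ℕ) :
    Module.End (RatFunc ℚ) (List Pi →₀ RatFunc ℚ) :=
  (qfacd (dd α) n)⁻¹ • (phiOp α) ^ n

/-- `ε_γ = ε_{γ₁} ∘ ⋯ ∘ ε_{γ_m}` for a path `γ`. -/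
def epsPath (root : Pi → X) (pair : Pi → X →+ ℤ) (dd : Pi → ℕ) (lam : X) (γ : List Pi) :
    Module.End (RatFunc ℚ) (List Pi →₀ RatFunc ℚ) :=
  (γ.map (epsOp root pair dd lam)).prod

/-- `φ_γ = φ_{γ₁} ∘ ⋯ ∘ φ_{γ_m}` for a path `γ`. -/
def phiPath (γ : List Pi) : Module.End (RatFunc ℚ) (List Pi →₀ RatFunc ℚ) :=
  (γ.map phiOp).prod

open Classical in
/-- The value `b_λ(δ,γ)` on basis paths. -/
def bentryQ (root : Pi → X) (pair : Pi → X →+ ℤ) (dd : Pi → ℕ) (lam : X) (δ γ : List Pi) :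
    RatFunc ℚ :=
  if hgt root δ = hgt root γ then
    (epsPath root pair dd lam δ.reverse (Finsupp.single γ 1)) [] else 0

/-- The bilinear form `b_λ` on `P_𝒬(λ)`. -/
def bformQ (root : Pi → X) (pair : Pi → X →+ ℤ) (dd : Pi → ℕ) (lam : X)
    (x y : List Pi →₀ RatFunc ℚ) : RatFunc ℚ :=
  x.sum fun δ cδ => y.sum fun γ cγ => cδ * cγ * bentryQ root pair dd lam δ γ

/-- Length of the initial run of `α`'s in a list. -/
def runLen (α : Pi) : List Pi → ℕ
  | [] => 0
  | β :: t => if β = α then runLen α t + 1 else 0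

/-- The scalar `δ^!`, a product of quantum factorials of run lengths. -/
def pfact (dd : Pi → ℕ) : List Pi → RatFunc ℚ
  | [] => 1
  | α :: t => qd (dd α) ((runLen α t : ℤ) + 1) * pfact dd t

/-- The normalized basis element `⟨δ⟩ = (1/δ^!)·δ`. -/
def nbasis (dd : Pi → ℕ) (δ : List Pi) : List Pi →₀ RatFunc ℚ :=
  (pfact dd δ)⁻¹ • Finsupp.single δ 1

/-- The lattice `P_𝒵(λ)`: the set of `𝒵`-linear combinations of the `⟨δ⟩`. -/
def latticeP (dd : Pi → ℕ) : Set (List Pi →₀ RatFunc ℚ) :=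
  {x | ∃ (s : Finset (List Pi)) (c : List Pi → RatFunc ℚ),
      (∀ δ, c δ ∈ ZZ) ∧ x = ∑ δ ∈ s, c δ • nbasis dd δ}

/-- The weight space `P_𝒬(λ)_μ`, spanned by the paths of height `λ - μ`. -/
def PQcomp (root : Pi → X) (lam μ : X) : Submodule (RatFunc ℚ) (List Pi →₀ RatFunc ℚ) :=
  Submodule.span (RatFunc ℚ)
    {p | ∃ δ : List Pi, hgt root δ = lam - μ ∧ p = Finsupp.single δ 1}


/-!
For a fixed simple root `α`, let `W k` be the sum of the weight spaces `P_𝒬(λ)_μ` with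
`⟨μ,α^∨⟩ = k`. Then `ε_α` maps `W k` to `W (k + 2)`, `φ_α` maps it to `W (k - 2)`, and
`ε_α φ_α = φ_α ε_α + [k]_α` on `W k`: deleting the new first letter of `(α, δ)` contributes
`[⟨λ - ht δ, α^∨⟩]_α δ`, all other deletions are deletions in `δ`. So `ε_α, φ_α` behave like the
generators `E, F` of `U_{v_α}(sl₂)`, and the formula is the usual commutation of their divided
powers: induction on `m` using `E F^{[n+1]} = F^{[n+1]} E + [k - n] F^{[n]}` and the
`v`-Pascal rule. For `α ≠ β`, `ε_α` and `φ_β` commute outright, since prepending `β` creates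
no new letter `α` to delete.
-/

namespace RatFunc

variable {K : Type*} [Field K]

lemma X_pow_ne_one {N : ℕ} (hN : 0 < N) : (RatFunc.X : RatFunc K) ^ N ≠ 1 := fun h =>
  transcendental_X (K := K)
    ⟨Polynomial.X ^ N - Polynomial.C 1, Polynomial.X_pow_sub_C_ne_zero hN 1, by simp [h]⟩

lemma X_zpow_sub_X_zpow_neg_ne_zero {N : ℕ} (hN : 0 < N) :
    (RatFunc.X : RatFunc K) ^ (N : ℤ) - RatFunc.X ^ (-(N : ℤ)) ≠ 0 := by
  intro h
  have h2N : (RatFunc.X : RatFunc K) ^ (2 * N) = 1 := by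
    have := congrArg (· * (RatFunc.X : RatFunc K) ^ (N : ℤ)) (sub_eq_zero.mp h)
    simp only [← zpow_add₀ (RatFunc.X_ne_zero (K := K)), neg_add_cancel, zpow_zero] at this
    rwa [two_mul, ← zpow_natCast, Nat.cast_add]
  exact X_pow_ne_one (by omega) h2N

end RatFunc

lemma qd_ne_zero {d : ℕ} (hd : d ≠ 0) (n : ℕ) : qd d (n + 1) ≠ 0 :=
  div_ne_zero (mod_cast RatFunc.X_zpow_sub_X_zpow_neg_ne_zero (N := d * (n + 1)) (by positivity))
    (RatFunc.X_zpow_sub_X_zpow_neg_ne_zero (Nat.pos_of_ne_zero hd))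

lemma qd_zero (d : ℕ) : qd d 0 = 0 := by simp [qd]

lemma qd_one {d : ℕ} (hd : d ≠ 0) : qd d 1 = 1 := by
  rw [qd, mul_one]
  exact div_self (RatFunc.X_zpow_sub_X_zpow_neg_ne_zero (Nat.pos_of_ne_zero hd))

lemma qd_eq (d : ℕ) (n : ℤ) :
    qd d n = ((RatFunc.X ^ (d : ℤ)) ^ n - ((RatFunc.X ^ (d : ℤ)) ^ n)⁻¹) /
      (RatFunc.X ^ (d : ℤ) - (RatFunc.X ^ (d : ℤ))⁻¹) := by
  rw [qd, zpow_neg, zpow_neg, zpow_mul]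

lemma qd_mul_qd (d : ℕ) (p b r : ℤ) :
    qd d p * qd d b = qd d (p - r) * qd d (b - r) + qd d r * qd d (p + b - r) := by
  simp only [qd_eq, div_mul_div_comm, ← add_div]
  congr 1
  have hu : (RatFunc.X : RatFunc ℚ) ^ (d : ℤ) ≠ 0 := zpow_ne_zero _ RatFunc.X_ne_zero
  generalize (RatFunc.X : RatFunc ℚ) ^ (d : ℤ) = u at hu ⊢
  simp only [zpow_sub₀ hu, zpow_add₀ hu]
  have hp := zpow_ne_zero p hu
  have hb := zpow_ne_zero b hu
  have hr := zpow_ne_zero r hu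
  field_simp
  ring

lemma qfacd_succ (d r : ℕ) : qfacd d (r + 1) = qfacd d r * qd d (r + 1) := by
  simp [qfacd, Finset.prod_range_succ]

lemma qfacd_ne_zero {d : ℕ} (hd : d ≠ 0) (r : ℕ) : qfacd d r ≠ 0 :=
  Finset.prod_ne_zero_iff.2 fun i _ => qd_ne_zero hd i

lemma qbinomd_zero (d : ℕ) (a : ℤ) : qbinomd d a 0 = 1 := by
  simp [qbinomd, qfacd]

lemma qbinomd_succ_pascal {d : ℕ} (hd : d ≠ 0) (a : ℤ) (m s : ℕ) :
    qd d (m + 1) * qbinomd d (a + 1) (s + 1) =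
      qd d (m - s) * qbinomd d a (s + 1) + qd d (a + m + 1 - s) * qbinomd d a s := by
  have hprod : ∏ i ∈ Finset.range (s + 1), qd d (a + 1 - i) =
      qd d (a + 1) * ∏ i ∈ Finset.range s, qd d (a - i) := by
    rw [Finset.prod_range_succ']
    simp only [Nat.cast_add, Nat.cast_one, Nat.cast_zero, sub_zero, add_sub_add_right_eq_sub]
    ring
  have hq := qd_ne_zero hd s
  have hF := qfacd_ne_zero hd s
  simp only [qbinomd, hprod, Finset.prod_range_succ, qfacd_succ]
  field_simp
  have h := qd_mul_qd d (m + 1) (a + 1) (s + 1)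
  ring_nf at h ⊢
  linear_combination (∏ i ∈ Finset.range s, qd d (a - i)) * h

section QuantumSl2

variable {M : Type*} [AddCommGroup M] [Module (RatFunc ℚ) M]

def qDividedPow (d : ℕ) (f : Module.End (RatFunc ℚ) M) (n : ℕ) : Module.End (RatFunc ℚ) M :=
  (qfacd d n)⁻¹ • f ^ n

lemma qDividedPow_zero (d : ℕ) (f : Module.End (RatFunc ℚ) M) : qDividedPow d f 0 = 1 := by
  simp [qDividedPow, qfacd]

lemma qDividedPow_succ (d : ℕ) (f : Module.End (RatFunc ℚ) M) (n : ℕ) :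
    qDividedPow d f (n + 1) = (qd d (n + 1))⁻¹ • (f * qDividedPow d f n) := by
  rw [qDividedPow, qDividedPow, mul_smul_comm, smul_smul, ← pow_succ', qfacd_succ, mul_inv,
    mul_comm]

lemma apply_qDividedPow {d : ℕ} (hd : d ≠ 0) (f : Module.End (RatFunc ℚ) M) (n : ℕ) (x : M) :
    f (qDividedPow d f n x) = qd d (n + 1) • qDividedPow d f (n + 1) x := by
  rw [qDividedPow_succ, LinearMap.smul_apply, smul_inv_smul₀ (qd_ne_zero hd n)]
  rfl

lemma sum_qbinomd_smul_pascal {d : ℕ} (hd : d ≠ 0) (a : ℤ) (m : ℕ) (T : ℕ → M) :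
    ∑ r ∈ Finset.range (m + 1),
        qbinomd d a r • (qd d (m + 1 - r) • T r + qd d (a + m + 1 - r) • T (r + 1)) =
      qd d (m + 1) • ∑ r ∈ Finset.range (m + 2), qbinomd d (a + 1) r • T r := by
  set f : ℕ → M := fun r => (qbinomd d a r * qd d (m + 1 - r)) • T r
  have hshift : ∑ r ∈ Finset.range (m + 1), f r = f 0 + ∑ r ∈ Finset.range (m + 1), f (r + 1) := by
    have hlast : f (m + 1) = 0 := by simp [f, qd_zero]
    rw [← add_zero (∑ r ∈ Finset.range (m + 1), f r), ← hlast, ← Finset.sum_range_succ,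
      Finset.sum_range_succ', add_comm]
  simp only [smul_add, smul_smul, Finset.sum_add_distrib]
  rw [hshift, Finset.sum_range_succ' _ (m + 1), smul_add, Finset.smul_sum]
  simp only [f, smul_smul, qbinomd_succ_pascal hd, qbinomd_zero, add_smul, Finset.sum_add_distrib,
    mul_comm (qd d _)]
  push_cast
  ring_nf
  abel

/-- `E` and `F` act like the Chevalley generators of `U_{v^d}(sl₂)` on a module with weight
spaces `W k`. -/
structure IsQuantumSl2Pair (d : ℕ) (E F : Module.End (RatFunc ℚ) M)
    (W : ℤ → Submodule (RatFunc ℚ) M) : Prop where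
  raise : ∀ {k x}, x ∈ W k → E x ∈ W (k + 2)
  lower : ∀ {k x}, x ∈ W k → F x ∈ W (k - 2)
  comm : ∀ {k x}, x ∈ W k → E (F x) = F (E x) + qd d k • x

-- Vanishing for `r > n` lets the commutation formula be summed over all `r ≤ m`, without `min`.
def pbwTerm (d : ℕ) (E F : Module.End (RatFunc ℚ) M) (m n r : ℕ) (x : M) : M :=
  if r ≤ n then qDividedPow d F (n - r) (qDividedPow d E (m - r) x) else 0

namespace IsQuantumSl2Pair

variable {d : ℕ} {E F : Module.End (RatFunc ℚ) M} {W : ℤ → Submodule (RatFunc ℚ) M}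

lemma comm_pow (h : IsQuantumSl2Pair d E F W) (hd : d ≠ 0) (n : ℕ) :
    ∀ {k x}, x ∈ W k →
      E ((F ^ (n + 1)) x) = (F ^ (n + 1)) (E x) + (qd d (n + 1) * qd d (k - n)) • (F ^ n) x := by
  induction n with
  | zero =>
    intro k x hx
    simp [h.comm hx, qd_one hd]
  | succ n ih =>
    intro k x hx
    have hpow : ∀ j y, (F ^ j) (F y) = (F ^ (j + 1)) y := fun j y => by
      rw [pow_succ, Module.End.mul_apply]
    rw [← hpow, ih (h.lower hx), h.comm hx, map_add, map_smul, hpow, hpow, add_assoc, ← add_smul]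
    congr 2
    have h := qd_mul_qd d (n + 2) (k - n - 1) 1
    rw [qd_one hd] at h
    push_cast
    ring_nf at h ⊢
    linear_combination -h

lemma comm_qDividedPow (h : IsQuantumSl2Pair d E F W) (hd : d ≠ 0) (n : ℕ) {k : ℤ} {x : M}
    (hx : x ∈ W k) :
    E (qDividedPow d F (n + 1) x) =
      qDividedPow d F (n + 1) (E x) + qd d (k - n) • qDividedPow d F n x := by
  simp only [qDividedPow, LinearMap.smul_apply, map_smul, h.comm_pow hd n hx, smul_add, smul_smul]
  congr 2
  have hq := qd_ne_zero hd n
  have hF := qfacd_ne_zero hd n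
  rw [qfacd_succ]
  field_simp

lemma qDividedPow_mem (h : IsQuantumSl2Pair d E F W) {k : ℤ} {x : M} (hx : x ∈ W k) (j : ℕ) :
    qDividedPow d E j x ∈ W (k + 2 * j) := by
  refine Submodule.smul_mem _ _ ?_
  induction j with
  | zero => simpa using hx
  | succ j ih =>
    rw [pow_succ', Module.End.mul_apply]
    convert h.raise ih using 2
    push_cast
    ring

lemma apply_pbwTerm (h : IsQuantumSl2Pair d E F W) (hd : d ≠ 0) {k : ℤ} {x : M} (hx : x ∈ W k)
    {m n r : ℕ} (hrm : r ≤ m) :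
    E (pbwTerm d E F m n r x) =
      qd d (m + 1 - r) • pbwTerm d E F (m + 1) n r x +
        qd d (k + m - n + m + 1 - r) • pbwTerm d E F (m + 1) n (r + 1) x := by
  have hEE : E (qDividedPow d E (m - r) x) = qd d (m + 1 - r) • qDividedPow d E (m + 1 - r) x := by
    rw [apply_qDividedPow hd, Nat.sub_add_comm hrm]
    push_cast [hrm]
    ring_nf
  rcases lt_trichotomy r n with hrn | rfl | hnr
  · obtain ⟨j, hj⟩ : ∃ j, n - r = j + 1 := ⟨n - r - 1, by omega⟩
    have hj' : n - (r + 1) = j := by omega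
    simp only [pbwTerm, if_pos hrn.le, if_pos (show r + 1 ≤ n by omega), hj, hj',
      Nat.add_sub_add_right]
    rw [h.comm_qDividedPow hd j (h.qDividedPow_mem hx (m - r)), hEE, map_smul]
    congr 3
    push_cast [hrm]
    omega
  · simp [pbwTerm, qDividedPow_zero, hEE]
  · simp [pbwTerm, not_le.mpr hnr, not_le.mpr (hnr.trans (Nat.lt_succ_self r))]

lemma qDividedPow_apply_eq_sum_pbwTerm (h : IsQuantumSl2Pair d E F W) (hd : d ≠ 0) {k : ℤ}
    {x : M} (hx : x ∈ W k) (n m : ℕ) :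
    qDividedPow d E m (qDividedPow d F n x) =
      ∑ r ∈ Finset.range (m + 1), qbinomd d (k + m - n) r • pbwTerm d E F m n r x := by
  induction m with
  | zero => simp [qDividedPow_zero, pbwTerm, qbinomd_zero]
  | succ m ih =>
    rw [qDividedPow_succ, LinearMap.smul_apply, Module.End.mul_apply, ih, map_sum]
    simp only [map_smul]
    rw [Finset.sum_congr rfl fun r hr => by
        rw [h.apply_pbwTerm hd hx (Finset.mem_range_succ_iff.mp hr)],
      sum_qbinomd_smul_pascal hd, inv_smul_smul₀ (qd_ne_zero hd m)]
    push_cast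
    ring_nf

theorem qDividedPow_apply_qDividedPow (h : IsQuantumSl2Pair d E F W) (hd : d ≠ 0) {k : ℤ}
    {x : M} (hx : x ∈ W k) (m n : ℕ) :
    qDividedPow d E m (qDividedPow d F n x) =
      ∑ r ∈ Finset.range (min m n + 1),
        qbinomd d (k + m - n) r • qDividedPow d F (n - r) (qDividedPow d E (m - r) x) := by
  rw [h.qDividedPow_apply_eq_sum_pbwTerm hd hx]
  simp only [pbwTerm, smul_ite, smul_zero]
  rw [← Finset.sum_filter]
  congr 1
  ext r
  simp only [Finset.mem_filter, Finset.mem_range]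
  omega

end IsQuantumSl2Pair

end QuantumSl2

section PathModel

variable {ι : Type*} (root : ι → X) (pair : ι → X →+ ℤ) (lam : X)

lemma hgt_cons (β : ι) (δ : List ι) : hgt root (β :: δ) = root β + hgt root δ := by
  simp [hgt]

lemma phiOp_single (β : ι) (δ : List ι) (c : RatFunc ℚ) :
    phiOp β (Finsupp.single δ c) = Finsupp.single (β :: δ) c :=
  Finsupp.mapDomain_single

/-- The weight-`k` space of the `U_{v_α}(sl₂)` attached to `α`: the sum of the weight spaces
`P_𝒬(λ)_μ` with `⟨μ,α^∨⟩ = k`. -/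
def sl2WeightSpace (α : ι) (k : ℤ) : Submodule (RatFunc ℚ) (List ι →₀ RatFunc ℚ) :=
  Submodule.span (RatFunc ℚ)
    {p | ∃ δ : List ι, pair α (lam - hgt root δ) = k ∧ p = Finsupp.single δ 1}

variable {root pair lam}

lemma single_mem_sl2WeightSpace (α : ι) (δ : List ι) (c : RatFunc ℚ) :
    Finsupp.single δ c ∈ sl2WeightSpace root pair lam α (pair α (lam - hgt root δ)) := by
  rw [← mul_one c, ← smul_eq_mul, ← Finsupp.smul_single]
  exact Submodule.smul_mem _ _ (Submodule.subset_span ⟨δ, rfl, rfl⟩)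

lemma PQcomp_le_sl2WeightSpace (α : ι) (μ : X) :
    PQcomp root lam μ ≤ sl2WeightSpace root pair lam α (pair α μ) :=
  Submodule.span_mono fun _ ⟨δ, hδ, hp⟩ => ⟨δ, by rw [hδ, sub_sub_cancel], hp⟩

lemma phiOp_mem_sl2WeightSpace {α : ι} (β : ι) {k : ℤ} {x : List ι →₀ RatFunc ℚ}
    (hx : x ∈ sl2WeightSpace root pair lam α k) :
    phiOp β x ∈ sl2WeightSpace root pair lam α (k - pair α (root β)) := by
  refine Submodule.mem_comap.1 (Submodule.span_le.2 ?_ hx)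
  rintro _ ⟨δ, rfl, rfl⟩
  rw [SetLike.mem_coe, Submodule.mem_comap, phiOp_single]
  convert single_mem_sl2WeightSpace α (β :: δ) 1 using 2
  rw [hgt_cons]
  simp only [map_sub, map_add]
  ring

variable [DecidableEq ι] {dd : ι → ℕ}

lemma epsOp_single (α : ι) (δ : List ι) (c : RatFunc ℚ) :
    epsOp root pair dd lam α (Finsupp.single δ c) = c • epsB root pair dd lam α δ :=
  Finsupp.linearCombination_single _ _ _

lemma epsOp_phiOp_single (α β : ι) (δ : List ι) :
    epsOp root pair dd lam α (phiOp β (Finsupp.single δ 1)) =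
      (if β = α then Finsupp.single δ (qd (dd α) (pair α (lam - hgt root δ))) else 0) +
        phiOp β (epsOp root pair dd lam α (Finsupp.single δ 1)) := by
  rw [phiOp_single, epsOp_single, epsOp_single, one_smul, one_smul, epsB]
  rfl

lemma epsOp_commute_phiOp {α β : ι} (hαβ : α ≠ β) :
    Commute (epsOp root pair dd lam α) (phiOp β) := by
  refine Finsupp.lhom_ext' fun δ => LinearMap.ext_ring ?_
  simpa [Ne.symm hαβ] using epsOp_phiOp_single α β δ

lemma epsDP_commute_phiDP {α β : ι} (hαβ : α ≠ β) (m n : ℕ) :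
    Commute (epsDP root pair dd lam α m) (phiDP dd β n) :=
  (((epsOp_commute_phiOp hαβ).pow_pow m n).smul_left _).smul_right _

lemma epsB_mem_sl2WeightSpace {α : ι} (hα : pair α (root α) = 2) (δ : List ι) :
    epsB root pair dd lam α δ ∈ sl2WeightSpace root pair lam α (pair α (lam - hgt root δ) + 2) := by
  induction δ with
  | nil => exact Submodule.zero_mem _
  | cons β t ih =>
    refine Submodule.add_mem _ ?_ ?_
    · split_ifs with hβ
      · convert single_mem_sl2WeightSpace α t _ using 2
        rw [hgt_cons, hβ, sub_add_eq_sub_sub_swap, map_sub, hα, sub_add_cancel]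
      · exact Submodule.zero_mem _
    · have hk : pair α (lam - hgt root (β :: t)) + 2 =
          pair α (lam - hgt root t) + 2 - pair α (root β) := by
        rw [hgt_cons]
        simp only [map_sub, map_add]
        ring
      rw [hk]
      exact phiOp_mem_sl2WeightSpace β ih

lemma epsOp_mem_sl2WeightSpace {α : ι} (hα : pair α (root α) = 2) {k : ℤ}
    {x : List ι →₀ RatFunc ℚ} (hx : x ∈ sl2WeightSpace root pair lam α k) :
    epsOp root pair dd lam α x ∈ sl2WeightSpace root pair lam α (k + 2) := by
  refine Submodule.mem_comap.1 (Submodule.span_le.2 ?_ hx)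
  rintro _ ⟨δ, rfl, rfl⟩
  rw [SetLike.mem_coe, Submodule.mem_comap, epsOp_single, one_smul]
  exact epsB_mem_sl2WeightSpace hα δ

lemma epsOp_phiOp_of_mem_sl2WeightSpace (α : ι) {k : ℤ} {x : List ι →₀ RatFunc ℚ}
    (hx : x ∈ sl2WeightSpace root pair lam α k) :
    epsOp root pair dd lam α (phiOp α x) =
      phiOp α (epsOp root pair dd lam α x) + qd (dd α) k • x := by
  refine LinearMap.eqOn_span
    (f := epsOp root pair dd lam α * phiOp α)
    (g := phiOp α * epsOp root pair dd lam α + qd (dd α) k • 1) ?_ hx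
  rintro _ ⟨δ, rfl, rfl⟩
  simp [epsOp_phiOp_single, add_comm]

lemma isQuantumSl2Pair_sl2WeightSpace {α : ι} (hα : pair α (root α) = 2) :
    IsQuantumSl2Pair (dd α) (epsOp root pair dd lam α) (phiOp α)
      (sl2WeightSpace root pair lam α) where
  raise := epsOp_mem_sl2WeightSpace hα
  lower hx := by simpa [hα] using phiOp_mem_sl2WeightSpace α hx
  comm := epsOp_phiOp_of_mem_sl2WeightSpace α

end PathModel

variable (root : Pi → X) (pair : Pi → X →+ ℤ) (dd : Pi → ℕ)

theorem divided_power_commutation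
    (hd : ∀ α, dd α ∈ ({1, 2, 3} : Set ℕ))
    (hpairself : ∀ α, pair α (root α) = 2)
    (lam : X) (α β : Pi) (m n : ℕ) (μ : X)
    (x : List Pi →₀ RatFunc ℚ) (hx : x ∈ PQcomp root lam μ) :
    (α ≠ β →
      epsDP root pair dd lam α m (phiDP dd β n x) =
        phiDP dd β n (epsDP root pair dd lam α m x)) ∧
    (α = β →
      epsDP root pair dd lam α m (phiDP dd α n x) =
        ∑ r ∈ Finset.range (min m n + 1),
          qbinomd (dd α) (pair α μ + (m : ℤ) - (n : ℤ)) r •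
            phiDP dd α (n - r) (epsDP root pair dd lam α (m - r) x)) := by
  have hdα : dd α ≠ 0 := fun h => by simpa [h] using hd α
  refine ⟨fun hαβ => ?_, fun _ => ?_⟩
  · exact LinearMap.congr_fun (epsDP_commute_phiDP hαβ m n).eq x
  · exact (isQuantumSl2Pair_sl2WeightSpace (hpairself α)).qDividedPow_apply_qDividedPow hdα
      (PQcomp_le_sl2WeightSpace α μ hx) m n
end
end

section
/- The bilinear form b_λ is symmetric: b_λ(x,y) = b_λ(y,x) for all x, y ∈ P_𝒬(λ). -/
/-!
Path model `P_𝒬(λ)`: the `ℚ(v)`-vector space with basis the simple root paths (lists in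
`Pi`), with operators `ε_α`, `φ_α`, and the bilinear form `b_λ` defined on basis paths by
`b_λ(δ,γ) = 0` if `ht(δ) ≠ ht(γ)` and `b_λ(δ,γ) = ε_{δʳ}(γ)` (coefficient of the empty
path) if `ht(δ) = ht(γ)`.

STATEMENT: `b_λ` is symmetric: `b_λ(x,y) = b_λ(y,x)` for all `x, y ∈ P_𝒬(λ)`.
-/

noncomputable section

variable {X : Type*} [AddCommGroup X] {Pi : Type*} [DecidableEq Pi]

variable (root : Pi → X) (pair : Pi → X →+ ℤ) (dd : Pi → ℕ)

/-!
Let `F(δ,γ)` be the coefficient of `∅` in `ε_{δʳ} γ`, i.e. `b_λ(δ,γ)` without the height test.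
Expanding `ε_α` on a path `β :: t` gives
`F(α :: s, β :: t) = [α = β] [⟨λ - ht t, α^∨⟩]_α F(s,t) + Σ_η (ε_α t)_η F(s, β :: η)`.
By induction on `|δ| + |γ|`, `F(s, β :: η) = F(β :: η, s) = Σ_ζ (ε_β s)_ζ F(η,ζ)`, so the second
term is a double sum that is symmetric under `(α, t) ↔ (β, s)`. The first term is symmetric because
`F(s,t) ≠ 0` forces `ht s = ht t`; the same fact makes the height test in `b_λ` redundant.
-/

open Finsupp

section Symmetry

variable (lam : X)

lemma epsB_apply_ne_zero {α : Pi} {γ η : List Pi} (h : epsB root pair dd lam α γ η ≠ 0) :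
    η.length + 1 = γ.length ∧ hgt root η + root α = hgt root γ := by
  induction γ generalizing η with
  | nil => simp [epsB] at h
  | cons β t ih =>
    by_cases hdiag : η = t ∧ β = α
    · obtain ⟨rfl, rfl⟩ := hdiag
      simp [hgt, add_comm]
    · have hshift : mapDomain (List.cons β) (epsB root pair dd lam α t) η ≠ 0 := by
        contrapose! h
        rw [epsB, Finsupp.add_apply, h, add_zero]
        split_ifs with hβ
        · exact single_eq_of_ne fun h => hdiag ⟨h, hβ⟩
        · rfl
      obtain ⟨η', hη', rfl⟩ := Finset.mem_image.mp (mapDomain_support (mem_support_iff.mpr hshift))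
      obtain ⟨hlen, hhgt⟩ := ih (mem_support_iff.mp hη')
      refine ⟨by simp [← hlen], ?_⟩
      simp only [hgt, List.map_cons, List.sum_cons] at hhgt ⊢
      rw [← hhgt]
      abel

def epsCoeff (δ : List Pi) : (List Pi →₀ RatFunc ℚ) →ₗ[RatFunc ℚ] RatFunc ℚ :=
  lapply [] ∘ₗ epsPath root pair dd lam δ.reverse

lemma epsCoeff_cons_apply (α : Pi) (δ : List Pi) (x : List Pi →₀ RatFunc ℚ) :
    epsCoeff root pair dd lam (α :: δ) x =
      epsCoeff root pair dd lam δ (epsOp root pair dd lam α x) := by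
  simp [epsCoeff, epsPath, Module.End.mul_apply]

lemma epsCoeff_single (δ η : List Pi) (c : RatFunc ℚ) :
    epsCoeff root pair dd lam δ (single η c) = c * epsCoeff root pair dd lam δ (single η 1) := by
  rw [← smul_single_one, map_smul, smul_eq_mul]

lemma epsCoeff_apply (δ : List Pi) (x : List Pi →₀ RatFunc ℚ) :
    epsCoeff root pair dd lam δ x =
      x.sum fun η c => c * epsCoeff root pair dd lam δ (single η 1) := by
  conv_lhs => rw [← sum_single x]
  rw [map_finsuppSum]
  exact sum_congr fun η _ => epsCoeff_single root pair dd lam δ η _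

lemma epsCoeff_nil_single (γ : List Pi) :
    epsCoeff root pair dd lam [] (single γ 1) = if γ = [] then 1 else 0 := by
  simp [epsCoeff, epsPath, single_apply]

lemma epsCoeff_cons_single (α : Pi) (δ γ : List Pi) :
    epsCoeff root pair dd lam (α :: δ) (single γ 1) =
      (epsB root pair dd lam α γ).sum fun η c => c * epsCoeff root pair dd lam δ (single η 1) := by
  rw [epsCoeff_cons_apply, epsOp, linearCombination_single, one_smul, epsCoeff_apply]

lemma epsCoeff_cons_single_cons (α β : Pi) (s t : List Pi) :
    epsCoeff root pair dd lam (α :: s) (single (β :: t) 1) =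
      (if β = α then
          qd (dd α) (pair α (lam - hgt root t)) * epsCoeff root pair dd lam s (single t 1)
        else 0) +
      (epsB root pair dd lam α t).sum fun η c =>
        c * epsCoeff root pair dd lam s (single (β :: η) 1) := by
  rw [epsCoeff_cons_apply, epsOp, linearCombination_single, one_smul, epsB, map_add]
  congr 1
  · split_ifs
    · rw [epsCoeff_single]
    · rw [map_zero]
  · rw [epsCoeff_apply, sum_mapDomain_index_inj List.cons_injective]

lemma hgt_eq_of_epsCoeff_single_ne_zero {δ γ : List Pi}
    (h : epsCoeff root pair dd lam δ (single γ 1) ≠ 0) : hgt root δ = hgt root γ := by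
  induction δ generalizing γ with
  | nil =>
    rw [epsCoeff_nil_single] at h
    split_ifs at h with hγ
    · rw [hγ]
    · exact absurd rfl h
  | cons α s ih =>
    rw [epsCoeff_cons_single] at h
    obtain ⟨η, hη, hne⟩ := Finset.exists_ne_zero_of_sum_ne_zero h
    have hstep := (epsB_apply_ne_zero root pair dd lam (mem_support_iff.mp hη)).2
    simp only [hgt, List.map_cons, List.sum_cons] at hstep ih ⊢
    rw [ih (right_ne_zero_of_mul hne), ← hstep, add_comm]

theorem epsCoeff_single_comm :
    ∀ δ γ : List Pi,
      epsCoeff root pair dd lam δ (single γ 1) = epsCoeff root pair dd lam γ (single δ 1)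
  | [], [] => rfl
  | [], _ :: _ | _ :: _, [] => by simp [epsCoeff_nil_single, epsCoeff_cons_single, epsB]
  | α :: s, β :: t => by
    rw [epsCoeff_cons_single_cons, epsCoeff_cons_single_cons]
    congr 1
    · by_cases hαβ : α = β
      · subst hαβ
        rw [if_pos rfl, if_pos rfl, epsCoeff_single_comm s t]
        rcases eq_or_ne (epsCoeff root pair dd lam t (single s 1)) 0 with h0 | h0
        · simp [h0]
        · rw [hgt_eq_of_epsCoeff_single_ne_zero root pair dd lam h0]
      · rw [if_neg (Ne.symm hαβ), if_neg hαβ]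
    · calc (epsB root pair dd lam α t).sum (fun η c =>
              c * epsCoeff root pair dd lam s (single (β :: η) 1))
          = (epsB root pair dd lam α t).sum fun η c => (epsB root pair dd lam β s).sum fun ζ d =>
              c * d * epsCoeff root pair dd lam η (single ζ 1) :=
            sum_congr fun η hη => by
              -- the length facts `hηlen`, `hζlen` discharge the termination goals
              have hηlen := (epsB_apply_ne_zero root pair dd lam (mem_support_iff.mp hη)).1
              rw [epsCoeff_single_comm s (β :: η), epsCoeff_cons_single, mul_sum]
              simp only [mul_assoc]
        _ = (epsB root pair dd lam β s).sum fun ζ d => (epsB root pair dd lam α t).sum fun η c =>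
              c * d * epsCoeff root pair dd lam η (single ζ 1) := sum_comm _ _ _
        _ = (epsB root pair dd lam β s).sum fun ζ d =>
              d * epsCoeff root pair dd lam t (single (α :: ζ) 1) :=
            sum_congr fun ζ hζ => by
              have hζlen := (epsB_apply_ne_zero root pair dd lam (mem_support_iff.mp hζ)).1
              rw [epsCoeff_single_comm t (α :: ζ), epsCoeff_cons_single, mul_sum]
              refine sum_congr fun η hη => ?_
              have hηlen := (epsB_apply_ne_zero root pair dd lam (mem_support_iff.mp hη)).1
              rw [epsCoeff_single_comm η ζ]
              ring
termination_by δ γ => δ.length + γ.length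

lemma bentryQ_eq_epsCoeff (δ γ : List Pi) :
    bentryQ root pair dd lam δ γ = epsCoeff root pair dd lam δ (single γ 1) := by
  unfold bentryQ
  split_ifs with hhgt
  · rfl
  · by_contra h
    exact hhgt (hgt_eq_of_epsCoeff_single_ne_zero root pair dd lam (Ne.symm h))

end Symmetry

theorem bform_symmetric
    (lam : X) (x y : List Pi →₀ RatFunc ℚ) :
    bformQ root pair dd lam x y = bformQ root pair dd lam y x := by
  rw [bformQ, bformQ, sum_comm]
  refine sum_congr fun γ _ => sum_congr fun δ _ => ?_
  rw [bentryQ_eq_epsCoeff, bentryQ_eq_epsCoeff, epsCoeff_single_comm, mul_comm (x δ)]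
end
end

section
/- Let l ≥ 1 be an integer such that l does not divide 2d_α for any α ∈ Π. Then for every F ∈ 𝒵[X] and all λ, γ ∈ X, the l-th cyclotomic polynomial σ_l divides F(λ + lγ) − F(λ) in ℤ[v,v⁻¹]. -/
/-!
`𝒬 = ℚ(v)` is `RatFunc ℚ` with `v = RatFunc.X`, and `𝒵[X]` is the `𝒵`-subalgebra of `X → 𝒬`
generated by the functions `μ ↦ [f(μ)]_{v^{d_α}}`.

The functions `F` with values in `𝒵` and `F(λ + lγ) ≡ F(λ) mod σ_l` form a `𝒵`-subalgebra, so
it suffices to treat a generator `μ ↦ [f(μ)]_α`. With `n = f(λ)`, `m = f(γ)` and `d = d_α`,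
`[n + lm] − [n] = (v^{dlm} − 1)[n] + v^{−dn}[lm]`. Here `σ_l ∣ v^l − 1 ∣ v^{dlm} − 1`, and
`[lm]` is a unit times `∑_{i<lm} v^{2di} = (v^{2dlm} − 1)/(v^{2d} − 1)`, the product of the `σ_e`
with `e ∣ 2dlm`, `e ∤ 2d`; since `l ∤ 2d`, `σ_l` is one of them.
-/

noncomputable section

/-- The `l`-th cyclotomic polynomial `σ_l`, regarded as an element of `ℚ(v)`. -/
def cycl (l : ℕ) : RatFunc ℚ := Polynomial.aeval RatFunc.X (Polynomial.cyclotomic l ℤ)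

open Polynomial

theorem cyclotomic_dvd_geom_sum_pow {l n e : ℕ} (hln : l ∣ n) (hle : ¬ l ∣ e) :
    cyclotomic l ℤ ∣ ∑ i ∈ Finset.range n, (X ^ e) ^ i := by
  obtain rfl | hn := eq_or_ne n 0
  · simp
  have he : e ≠ 0 := by rintro rfl; exact hle (dvd_zero l)
  have hmem : l ∈ (e * n).divisors \ e.divisors := by
    simp [Nat.mem_divisors, hln.mul_left e, hle, he, hn]
  have hcancel : (X ^ e - 1 : ℤ[X]) * ∑ i ∈ Finset.range n, (X ^ e) ^ i
      = (X ^ e - 1) * ∏ x ∈ (e * n).divisors \ e.divisors, cyclotomic x ℤ := by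
    rw [X_pow_sub_one_mul_prod_cyclotomic_eq_X_pow_sub_one_of_dvd ℤ (dvd_mul_right e n)
      (mul_ne_zero he hn), mul_comm, geom_sum_mul, pow_mul]
  rw [mul_left_cancel₀ (X_pow_sub_C_ne_zero (Nat.pos_of_ne_zero he) 1) hcancel]
  exact Finset.dvd_prod_of_mem _ hmem

local notation "v" => (RatFunc.X : RatFunc ℚ)

theorem RatFunc.X_pow_ne_one_s15 {n : ℕ} (hn : n ≠ 0) : v ^ n ≠ 1 := by
  intro h
  have hdeg := congrArg RatFunc.intDegree h
  rw [← RatFunc.algebraMap_X, ← map_pow, RatFunc.intDegree_polynomial,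
    RatFunc.intDegree_one, natDegree_X_pow, Int.natCast_eq_zero] at hdeg
  exact hn hdeg

theorem sub_inv_div_sub_inv_eq_geom_sum {K : Type*} [Field K] {y : K} (hy0 : y ≠ 0)
    (hy : y ^ 2 ≠ 1) (n : ℕ) :
    (y ^ n - (y ^ n)⁻¹) / (y - y⁻¹) = (y ^ n)⁻¹ * y * ∑ i ∈ Finset.range n, (y ^ 2) ^ i := by
  have hden : y - y⁻¹ ≠ 0 := by
    contrapose! hy
    field_simp at hy
    linear_combination hy
  rw [div_eq_iff hden, eq_comm]
  calc (y ^ n)⁻¹ * y * (∑ i ∈ Finset.range n, (y ^ 2) ^ i) * (y - y⁻¹)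
      = (y ^ n)⁻¹ * ((∑ i ∈ Finset.range n, (y ^ 2) ^ i) * (y ^ 2 - 1)) := by field_simp
    _ = (y ^ n)⁻¹ * ((y ^ n) ^ 2 - 1) := by rw [geom_sum_mul, ← pow_mul, ← pow_mul, mul_comm 2]
    _ = y ^ n - (y ^ n)⁻¹ := by field_simp

theorem qd_natCast (d n : ℕ) :
    qd d n = ((v ^ d) ^ n - ((v ^ d) ^ n)⁻¹) / (v ^ d - (v ^ d)⁻¹) := by
  simp only [qd, zpow_neg, zpow_mul, zpow_natCast]

theorem qd_neg (d : ℕ) (n : ℤ) : qd d (-n) = -qd d n := by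
  rw [qd, qd, mul_neg, neg_neg, ← neg_div, neg_sub]

theorem qd_add (d : ℕ) (a b : ℤ) :
    qd d (a + b) = v ^ ((d : ℤ) * b) * qd d a + v ^ (-((d : ℤ) * a)) * qd d b := by
  simp only [qd, mul_div_assoc', ← add_div, mul_add, zpow_add₀ (RatFunc.X_ne_zero (K := ℚ)),
    neg_add, zpow_neg]
  ring

theorem X_mem_ZZ : v ∈ ZZ := Algebra.subset_adjoin (by simp)

theorem X_inv_mem_ZZ : v⁻¹ ∈ ZZ := Algebra.subset_adjoin (by simp)

theorem X_zpow_mem_ZZ (k : ℤ) : v ^ k ∈ ZZ := by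
  obtain ⟨n, rfl | rfl⟩ := k.eq_nat_or_neg
  · exact zpow_natCast v n ▸ pow_mem X_mem_ZZ n
  · rw [zpow_neg, zpow_natCast, ← inv_pow]
    exact pow_mem X_inv_mem_ZZ n

theorem aeval_X_mem_ZZ (p : ℤ[X]) : aeval v p ∈ ZZ :=
  Algebra.adjoin_mono (by simp) (aeval_mem_adjoin_singleton ℤ v)

theorem qd_natCast_eq_mul_aeval {d : ℕ} (hd : d ≠ 0) (n : ℕ) :
    ∃ u ∈ ZZ, qd d n = u * aeval v (∑ i ∈ Finset.range n, (X ^ (2 * d) : ℤ[X]) ^ i) := by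
  have hu : ((v ^ d) ^ n)⁻¹ ∈ ZZ := by
    rw [← inv_pow, ← inv_pow]
    exact pow_mem (pow_mem X_inv_mem_ZZ d) n
  refine ⟨_, mul_mem hu (pow_mem X_mem_ZZ d), ?_⟩
  rw [qd_natCast, sub_inv_div_sub_inv_eq_geom_sum (pow_ne_zero d RatFunc.X_ne_zero)]
  · simp [pow_mul']
  · rw [← pow_mul]; exact RatFunc.X_pow_ne_one_s15 (by omega)

theorem qd_mem_ZZ {d : ℕ} (hd : d ≠ 0) (n : ℤ) : qd d n ∈ ZZ := by
  suffices h : ∀ k : ℕ, qd d k ∈ ZZ by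
    obtain ⟨k, rfl | rfl⟩ := n.eq_nat_or_neg
    · exact h k
    · exact qd_neg d k ▸ neg_mem (h k)
  intro k
  obtain ⟨u, hu, hqd⟩ := qd_natCast_eq_mul_aeval hd k
  exact hqd ▸ mul_mem hu (aeval_X_mem_ZZ _)

def cyclMultiples (l : ℕ) : Submodule ZZ (RatFunc ℚ) := Submodule.span ZZ {cycl l}

theorem mem_cyclMultiples_iff {l : ℕ} {x : RatFunc ℚ} :
    x ∈ cyclMultiples l ↔ ∃ z ∈ ZZ, x = cycl l * z := by
  simp only [cyclMultiples, Submodule.mem_span_singleton, Subalgebra.smul_def, Subtype.exists,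
    exists_prop, smul_eq_mul, mul_comm (cycl l), eq_comm]

theorem mul_mem_cyclMultiples {l : ℕ} {r x : RatFunc ℚ} (hr : r ∈ ZZ) (hx : x ∈ cyclMultiples l) :
    r * x ∈ cyclMultiples l :=
  Submodule.smul_mem _ (⟨r, hr⟩ : ZZ) hx

theorem aeval_X_mem_cyclMultiples {l : ℕ} {p : ℤ[X]} (hp : cyclotomic l ℤ ∣ p) :
    aeval v p ∈ cyclMultiples l := by
  obtain ⟨q, rfl⟩ := hp
  rw [map_mul, mul_comm]
  exact mul_mem_cyclMultiples (aeval_X_mem_ZZ q) (Submodule.subset_span rfl)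

theorem X_zpow_sub_one_mem_cyclMultiples {l : ℕ} {k : ℤ} (hk : (l : ℤ) ∣ k) :
    v ^ k - 1 ∈ cyclMultiples l := by
  have hnat : ∀ j : ℕ, v ^ ((l : ℤ) * j) - 1 ∈ cyclMultiples l := fun j => by
    rw [← Nat.cast_mul, zpow_natCast]
    simpa using aeval_X_mem_cyclMultiples
      ((cyclotomic.dvd_X_pow_sub_one l ℤ).trans (pow_one_sub_dvd_pow_mul_sub_one X l j))
  obtain ⟨m, rfl⟩ := hk
  obtain ⟨j, rfl | rfl⟩ := m.eq_nat_or_neg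
  · exact hnat j
  · have hinv : v ^ (-((l : ℤ) * j)) - 1 = -v ^ (-((l : ℤ) * j)) * (v ^ ((l : ℤ) * j) - 1) := by
      have := zpow_ne_zero ((l : ℤ) * j) (RatFunc.X_ne_zero (K := ℚ))
      rw [zpow_neg]
      field_simp
      ring
    rw [mul_neg, hinv]
    exact mul_mem_cyclMultiples (neg_mem (X_zpow_mem_ZZ _)) (hnat j)

theorem qd_mul_mem_cyclMultiples {d l : ℕ} (hnd : ¬ l ∣ 2 * d) (m : ℤ) :
    qd d (l * m) ∈ cyclMultiples l := by
  have hd : d ≠ 0 := by rintro rfl; exact hnd (dvd_zero l)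
  suffices h : ∀ k : ℕ, qd d (l * k : ℕ) ∈ cyclMultiples l by
    obtain ⟨k, rfl | rfl⟩ := m.eq_nat_or_neg
    · exact_mod_cast h k
    · rw [mul_neg, qd_neg]; exact neg_mem (by exact_mod_cast h k)
  intro k
  obtain ⟨u, hu, hqd⟩ := qd_natCast_eq_mul_aeval hd (l * k)
  exact hqd ▸ mul_mem_cyclMultiples hu
    (aeval_X_mem_cyclMultiples (cyclotomic_dvd_geom_sum_pow (dvd_mul_right l k) hnd))

theorem qd_add_mul_sub_qd_mem_cyclMultiples {d l : ℕ} (hnd : ¬ l ∣ 2 * d) (n m : ℤ) :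
    qd d (n + l * m) - qd d n ∈ cyclMultiples l := by
  have hd : d ≠ 0 := by rintro rfl; exact hnd (dvd_zero l)
  have hsplit : qd d (n + l * m) - qd d n
      = (v ^ ((d : ℤ) * (l * m)) - 1) * qd d n + v ^ (-((d : ℤ) * n)) * qd d (l * m) := by
    rw [qd_add]; ring
  rw [hsplit, mul_comm _ (qd d n)]
  exact add_mem
    (mul_mem_cyclMultiples (qd_mem_ZZ hd n)
      (X_zpow_sub_one_mem_cyclMultiples ⟨d * m, by ring⟩))
    (mul_mem_cyclMultiples (X_zpow_mem_ZZ _) (qd_mul_mem_cyclMultiples hnd m))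

section PeriodicMod

variable {S K ι : Type*} [CommRing S] [CommRing K] [Algebra S K]

def periodicModSubalgebra (R : Subalgebra S K) (M : Submodule R K) (τ : ι → ι) :
    Subalgebra R (ι → K) where
  carrier := {F | (∀ μ, F μ ∈ R) ∧ ∀ μ, F (τ μ) - F μ ∈ M}
  mul_mem' := by
    rintro F G ⟨hFR, hFM⟩ ⟨hGR, hGM⟩
    refine ⟨fun μ => mul_mem (hFR μ) (hGR μ), fun μ => ?_⟩
    have hsplit : F (τ μ) * G (τ μ) - F μ * G μ
        = F (τ μ) * (G (τ μ) - G μ) + G μ * (F (τ μ) - F μ) := by ring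
    simp only [Pi.mul_apply, hsplit]
    exact add_mem (M.smul_mem ⟨_, hFR (τ μ)⟩ (hGM μ)) (M.smul_mem ⟨_, hGR μ⟩ (hFM μ))
  add_mem' := by
    rintro F G ⟨hFR, hFM⟩ ⟨hGR, hGM⟩
    refine ⟨fun μ => add_mem (hFR μ) (hGR μ), fun μ => ?_⟩
    simpa only [Pi.add_apply, add_sub_add_comm] using add_mem (hFM μ) (hGM μ)
  algebraMap_mem' r := ⟨fun _ => r.2, fun _ => by
    change (r : K) - r ∈ M
    rw [sub_self]
    exact M.zero_mem⟩

end PeriodicMod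

theorem qd_comp_mem_periodicModSubalgebra {X : Type*} [AddCommGroup X] {d l : ℕ}
    (hnd : ¬ l ∣ 2 * d) (f : X →+ ℤ) (γ : X) :
    (fun μ => qd d (f μ)) ∈ periodicModSubalgebra ZZ (cyclMultiples l) (· + l • γ) := by
  have hd : d ≠ 0 := by rintro rfl; exact hnd (dvd_zero l)
  refine ⟨fun μ => qd_mem_ZZ hd (f μ), fun μ => ?_⟩
  have hf : f (μ + l • γ) = f μ + l * f γ := by rw [map_add, map_nsmul, nsmul_eq_mul]
  simpa only [hf] using qd_add_mul_sub_qd_mem_cyclMultiples hnd (f μ) (f γ)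

theorem cyclotomic_dvd_quantum_polynomial_periodicity_general
    (X : Type*) [AddCommGroup X] (Pi : Type*)
    (d : Pi → ℕ)
    (l : ℕ) (hnd : ∀ α, ¬ (l ∣ 2 * d α))
    (F : X → RatFunc ℚ)
    (hF : F ∈ Algebra.adjoin ZZ
      {g : X → RatFunc ℚ | ∃ (f : X →+ ℤ) (α : Pi), g = fun μ => qd (d α) (f μ)})
    (lam γ : X) :
    ∃ z ∈ ZZ, F (lam + l • γ) - F lam = cycl l * z := by
  have hgen : {g : X → RatFunc ℚ | ∃ (f : X →+ ℤ) (α : Pi), g = fun μ => qd (d α) (f μ)}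
      ⊆ periodicModSubalgebra ZZ (cyclMultiples l) (· + l • γ) := by
    rintro _ ⟨f, α, rfl⟩
    exact qd_comp_mem_periodicModSubalgebra (hnd α) f γ
  exact mem_cyclMultiples_iff.mp ((Algebra.adjoin_le hgen hF).2 lam)

theorem cyclotomic_dvd_quantum_polynomial_periodicity
    (X : Type*) [AddCommGroup X] (Pi : Type*) [Fintype Pi]
    (root : Pi → X) (pair : Pi → X →+ ℤ) (d : Pi → ℕ)
    (hd : ∀ α, d α ∈ ({1, 2, 3} : Set ℕ))
    (hsym : ∀ α β, (d α : ℤ) * pair α (root β) = (d β : ℤ) * pair β (root α))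
    (hpairself : ∀ α, pair α (root α) = 2)
    (l : ℕ) (hl : 1 ≤ l) (hnd : ∀ α, ¬ (l ∣ 2 * d α))
    (F : X → RatFunc ℚ)
    (hF : F ∈ Algebra.adjoin ZZ
      {g : X → RatFunc ℚ | ∃ (f : X →+ ℤ) (α : Pi), g = fun μ => qd (d α) (f μ)})
    (lam γ : X) :
    ∃ z ∈ ZZ, F (lam + l • γ) - F lam = cycl l * z :=
  cyclotomic_dvd_quantum_polynomial_periodicity_general X Pi d l hnd F hF lam γ

end
end
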